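/- Define F₊(u,v) = −(1/(2π))·exp(u)/(exp(u) − exp(v)) and F₋(u,v) = (1/(2π))·exp(conj u)/(exp(conj u) + exp(v)) for complex u, v (whenever the denominators are nonzero). Then for every real x and every real y with 0 < y < π/2: 4·Re( ∫_y^{π/2} ∫_y^{π/2} [ F₊(conj(x+𝕚t₁), x+𝕚t₀)·conj(F₊(conj(x+𝕚t₀), x+𝕚t₁)) + F₋(conj(x+𝕚t₁), x+𝕚t₀)·F₋(conj(x+𝕚t₀), x+𝕚t₁) ] dt₀ dt₁ ) = −(1/π²)·log(sin y). -/

import Mathlib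

set_option maxHeartbeats 2000000


open MeasureTheory intervalIntegral

/-- `F₊(u,v) = −(1/(2π))·exp(u)/(exp(u) − exp(v))`. -/
noncomputable def Fplus (u v : ℂ) : ℂ :=
  -(1 / (2 * (Real.pi : ℂ))) * (Complex.exp u / (Complex.exp u - Complex.exp v))

/-- `F₋(u,v) = (1/(2π))·exp(conj u)/(exp(conj u) + exp(v))`. -/
noncomputable def Fminus (u v : ℂ) : ℂ :=
  (1 / (2 * (Real.pi : ℂ))) *
    (Complex.exp ((starRingEnd ℂ) u) / (Complex.exp ((starRingEnd ℂ) u) + Complex.exp v))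

lemma generic_id (A B X P : ℂ) (hA : A ≠ 0) (hB : B ≠ 0) (hX : X ≠ 0) (hP : P ≠ 0)
    (h1 : A^2*B^2 - 1 ≠ 0) (h2 : A^2 + B^2 ≠ 0) :
    -(1/(2*P) * (X * (B^2)⁻¹ / (X * (B^2)⁻¹ - X * A^2)) *
      -(1/(2*P) * (X * A^2 / (X * A^2 - X * (B^2)⁻¹)))) +
    1/(2*P) * (X * B^2 / (X * B^2 + X * A^2)) *
      (1/(2*P) * (X * A^2 / (X * A^2 + X * B^2))) =
    1/(16*P^2) * (1 / (-((A*B)⁻¹ - A*B)^2/4) + 1 / ((A/B + B/A)/2)^2) := by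
  have d1 : X * (B^2)⁻¹ - X * A^2 = -(X * (B^2)⁻¹) * (A^2*B^2 - 1) := by field_simp; ring
  have d2 : X * A^2 - X * (B^2)⁻¹ = X * (B^2)⁻¹ * (A^2*B^2 - 1) := by field_simp
  have d3 : (A*B)⁻¹ - A*B = -(A*B)⁻¹ * (A^2*B^2 - 1) := by field_simp; ring
  have d4 : A/B + B/A = (A^2 + B^2)/(A*B) := by field_simp
  have d5 : X * B^2 + X * A^2 = X * (A^2 + B^2) := by ring
  have d6 : X * A^2 + X * B^2 = X * (A^2 + B^2) := by ring
  rw [mul_add]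
  congr 1
  · rw [d1, d2, d3]
    generalize hD : A^2*B^2 - 1 = D
    rw [hD] at h1
    field_simp [h1]
    ring
  · rw [d4, d5, d6]
    generalize hQ : A^2 + B^2 = Q
    rw [hQ] at h2
    field_simp [h2]
    ring

lemma integrand_eq (x t0 t1 : ℝ) (hS : Real.sin ((t0+t1)/2) ≠ 0)
    (hC : Real.cos ((t0-t1)/2) ≠ 0) :
    (Fplus ((starRingEnd ℂ) (x + Complex.I * t1)) (x + Complex.I * t0) *
        (starRingEnd ℂ)
          (Fplus ((starRingEnd ℂ) (x + Complex.I * t0)) (x + Complex.I * t1)) +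
      Fminus ((starRingEnd ℂ) (x + Complex.I * t1)) (x + Complex.I * t0) *
        Fminus ((starRingEnd ℂ) (x + Complex.I * t0)) (x + Complex.I * t1)) =
    ((1/(16*Real.pi^2) * (1/Real.sin ((t0+t1)/2)^2 + 1/Real.cos ((t0-t1)/2)^2) : ℝ) : ℂ) := by
  have hpi : (Real.pi : ℂ) ≠ 0 := Complex.ofReal_ne_zero.2 Real.pi_ne_zero
  have hE : Complex.exp (Complex.I * ((t0:ℂ)/2)) ≠ 0 := Complex.exp_ne_zero _
  have hF : Complex.exp (Complex.I * ((t1:ℂ)/2)) ≠ 0 := Complex.exp_ne_zero _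
  have hX : Complex.exp (x : ℂ) ≠ 0 := Complex.exp_ne_zero _
  have ea : ∀ s : ℝ, Complex.exp ((x:ℂ) + Complex.I * (s:ℂ)) =
      Complex.exp (x:ℂ) * Complex.exp (Complex.I * ((s:ℂ)/2))^2 := by
    intro s
    rw [Complex.exp_add, ← Complex.exp_nat_mul]
    congr 2
    push_cast
    ring
  have ea' : ∀ s : ℝ, Complex.exp ((x:ℂ) + -(Complex.I * (s:ℂ))) =
      Complex.exp (x:ℂ) * (Complex.exp (Complex.I * ((s:ℂ)/2))^2)⁻¹ := by
    intro s
    rw [Complex.exp_add, Complex.exp_neg, ← Complex.exp_nat_mul]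
    congr 3
    push_cast
    ring
  have hS2 : Complex.sin (((t0:ℂ)+(t1:ℂ))/2) =
      ((Complex.exp (Complex.I * ((t0:ℂ)/2)) * Complex.exp (Complex.I * ((t1:ℂ)/2)))⁻¹ -
        Complex.exp (Complex.I * ((t0:ℂ)/2)) * Complex.exp (Complex.I * ((t1:ℂ)/2))) *
        Complex.I / 2 := by
    rw [Complex.sin, neg_mul, Complex.exp_neg, ← Complex.exp_add,
      show ((t0:ℂ)+(t1:ℂ))/2 * Complex.I = Complex.I * ((t0:ℂ)/2) + Complex.I * ((t1:ℂ)/2) by ring]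
  have hC2 : Complex.cos (((t0:ℂ)-(t1:ℂ))/2) =
      (Complex.exp (Complex.I * ((t0:ℂ)/2)) / Complex.exp (Complex.I * ((t1:ℂ)/2)) +
        Complex.exp (Complex.I * ((t1:ℂ)/2)) / Complex.exp (Complex.I * ((t0:ℂ)/2))) / 2 := by
    rw [Complex.cos, neg_mul,
      show ((t0:ℂ)-(t1:ℂ))/2 * Complex.I = Complex.I * ((t0:ℂ)/2) - Complex.I * ((t1:ℂ)/2) by ring,
      neg_sub, Complex.exp_sub, Complex.exp_sub]
  have hSc : Complex.sin (((t0:ℂ)+(t1:ℂ))/2) ≠ 0 := by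
    rw [show ((t0:ℂ)+(t1:ℂ))/2 = (((t0+t1)/2 : ℝ) : ℂ) by push_cast; ring, ← Complex.ofReal_sin]
    exact_mod_cast hS
  have hCc : Complex.cos (((t0:ℂ)-(t1:ℂ))/2) ≠ 0 := by
    rw [show ((t0:ℂ)-(t1:ℂ))/2 = (((t0-t1)/2 : ℝ) : ℂ) by push_cast; ring, ← Complex.ofReal_cos]
    exact_mod_cast hC
  have hSne : ((Complex.exp (Complex.I * ((t0:ℂ)/2)) * Complex.exp (Complex.I * ((t1:ℂ)/2)))⁻¹ -
        Complex.exp (Complex.I * ((t0:ℂ)/2)) * Complex.exp (Complex.I * ((t1:ℂ)/2))) ≠ 0 := by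
    intro h
    apply hSc
    rw [hS2, h]; ring
  have hCne : (Complex.exp (Complex.I * ((t0:ℂ)/2)) / Complex.exp (Complex.I * ((t1:ℂ)/2)) +
        Complex.exp (Complex.I * ((t1:ℂ)/2)) / Complex.exp (Complex.I * ((t0:ℂ)/2))) ≠ 0 := by
    intro h
    apply hCc
    rw [hC2, h]; ring
  have hab : Complex.exp (x:ℂ) * (Complex.exp (Complex.I * ((t1:ℂ)/2))^2)⁻¹ -
      Complex.exp (x:ℂ) * Complex.exp (Complex.I * ((t0:ℂ)/2))^2 ≠ 0 := by
    have heq : Complex.exp (x:ℂ) * (Complex.exp (Complex.I * ((t1:ℂ)/2))^2)⁻¹ -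
        Complex.exp (x:ℂ) * Complex.exp (Complex.I * ((t0:ℂ)/2))^2 =
        Complex.exp (x:ℂ) * (Complex.exp (Complex.I * ((t0:ℂ)/2)) / Complex.exp (Complex.I * ((t1:ℂ)/2))) *
          ((Complex.exp (Complex.I * ((t0:ℂ)/2)) * Complex.exp (Complex.I * ((t1:ℂ)/2)))⁻¹ -
            Complex.exp (Complex.I * ((t0:ℂ)/2)) * Complex.exp (Complex.I * ((t1:ℂ)/2))) := by
      field_simp
    rw [heq]
    exact mul_ne_zero (mul_ne_zero hX (div_ne_zero hE hF)) hSne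
  have hbc : Complex.exp (x:ℂ) * Complex.exp (Complex.I * ((t0:ℂ)/2))^2 +
      Complex.exp (x:ℂ) * Complex.exp (Complex.I * ((t1:ℂ)/2))^2 ≠ 0 := by
    have heq : Complex.exp (x:ℂ) * Complex.exp (Complex.I * ((t0:ℂ)/2))^2 +
        Complex.exp (x:ℂ) * Complex.exp (Complex.I * ((t1:ℂ)/2))^2 =
        Complex.exp (x:ℂ) * (Complex.exp (Complex.I * ((t0:ℂ)/2)) * Complex.exp (Complex.I * ((t1:ℂ)/2))) *
          (Complex.exp (Complex.I * ((t0:ℂ)/2)) / Complex.exp (Complex.I * ((t1:ℂ)/2)) +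
            Complex.exp (Complex.I * ((t1:ℂ)/2)) / Complex.exp (Complex.I * ((t0:ℂ)/2))) := by
      field_simp
    rw [heq]
    exact mul_ne_zero (mul_ne_zero hX (mul_ne_zero hE hF)) hCne
  have hba : Complex.exp (x:ℂ) * Complex.exp (Complex.I * ((t0:ℂ)/2))^2 -
      Complex.exp (x:ℂ) * (Complex.exp (Complex.I * ((t1:ℂ)/2))^2)⁻¹ ≠ 0 := fun h => hab (by linear_combination -h)
  have hcb : Complex.exp (x:ℂ) * Complex.exp (Complex.I * ((t1:ℂ)/2))^2 +
      Complex.exp (x:ℂ) * Complex.exp (Complex.I * ((t0:ℂ)/2))^2 ≠ 0 := fun h => hbc (by linear_combination h)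
  simp only [Fplus, Fminus, map_mul, map_div₀, map_neg, map_sub, map_add, map_one, map_ofNat,
    Complex.conj_conj, Complex.conj_I, Complex.conj_ofReal, ← Complex.exp_conj]
  push_cast
  rw [hS2, hC2]
  simp only [neg_mul, neg_neg, ea, ea']
  rw [show ∀ w:ℂ, (w * Complex.I / 2)^2 = -(w^2)/4 by intro w; rw [div_pow, mul_pow, Complex.I_sq]; ring]
  refine generic_id _ _ _ _ hE hF hX hpi ?_ ?_
  · intro h
    apply hSne
    have hm : (Complex.exp (Complex.I * ((t0:ℂ)/2)) * Complex.exp (Complex.I * ((t1:ℂ)/2))) *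
        (Complex.exp (Complex.I * ((t0:ℂ)/2)) * Complex.exp (Complex.I * ((t1:ℂ)/2))) = 1 := by
      linear_combination h
    exact sub_eq_zero.mpr (eq_inv_of_mul_eq_one_left hm).symm
  · intro h
    apply hCne
    have hd : Complex.exp (Complex.I * ((t0:ℂ)/2)) / Complex.exp (Complex.I * ((t1:ℂ)/2)) +
        Complex.exp (Complex.I * ((t1:ℂ)/2)) / Complex.exp (Complex.I * ((t0:ℂ)/2)) =
        (Complex.exp (Complex.I * ((t0:ℂ)/2))^2 + Complex.exp (Complex.I * ((t1:ℂ)/2))^2) /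
          (Complex.exp (Complex.I * ((t0:ℂ)/2)) * Complex.exp (Complex.I * ((t1:ℂ)/2))) := by
      rw [div_add_div _ _ hF hE]
      congr 1 <;> ring
    rw [hd, h, zero_div]


noncomputable def gg (t0 t1 : ℝ) : ℝ :=
  1/(16*Real.pi^2) * (1/Real.sin ((t0+t1)/2)^2 + 1/Real.cos ((t0-t1)/2)^2)

lemma hasDerivAt_cot_half (c t : ℝ) (h : Real.sin ((t + c)/2) ≠ 0) :
    HasDerivAt (fun s : ℝ => Real.cos ((s + c)/2) / Real.sin ((s + c)/2))
      (-(1/2) / Real.sin ((t + c)/2)^2) t := by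
  have haff : HasDerivAt (fun s : ℝ => (s + c)/2) (1/2) t :=
    ((hasDerivAt_id t).add_const c).div_const 2
  have hcos : HasDerivAt (fun s : ℝ => Real.cos ((s + c)/2))
      (-Real.sin ((t + c)/2) * (1/2)) t := (Real.hasDerivAt_cos _).comp t haff
  have hsin : HasDerivAt (fun s : ℝ => Real.sin ((s + c)/2))
      (Real.cos ((t + c)/2) * (1/2)) t := (Real.hasDerivAt_sin _).comp t haff
  have hd := hcos.div hsin h
  refine hd.congr_deriv (Eq.symm ?_)
  have hp := Real.sin_sq_add_cos_sq ((t + c)/2)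
  rw [div_eq_div_iff (pow_ne_zero 2 h) (pow_ne_zero 2 h)]
  linear_combination ((1/2) * Real.sin ((t + c)/2)^2) * hp

lemma hasDerivAt_tan_half (c t : ℝ) (h : Real.cos ((t - c)/2) ≠ 0) :
    HasDerivAt (fun s : ℝ => Real.sin ((s - c)/2) / Real.cos ((s - c)/2))
      ((1/2) / Real.cos ((t - c)/2)^2) t := by
  have haff : HasDerivAt (fun s : ℝ => (s - c)/2) (1/2) t :=
    ((hasDerivAt_id t).sub_const c).div_const 2
  have hsin : HasDerivAt (fun s : ℝ => Real.sin ((s - c)/2))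
      (Real.cos ((t - c)/2) * (1/2)) t := (Real.hasDerivAt_sin _).comp t haff
  have hcos : HasDerivAt (fun s : ℝ => Real.cos ((s - c)/2))
      (-Real.sin ((t - c)/2) * (1/2)) t := (Real.hasDerivAt_cos _).comp t haff
  have hd := hsin.div hcos h
  refine hd.congr_deriv (Eq.symm ?_)
  have hp := Real.sin_sq_add_cos_sq ((t - c)/2)
  rw [div_eq_div_iff (pow_ne_zero 2 h) (pow_ne_zero 2 h)]
  linear_combination (-(1/2) * Real.cos ((t - c)/2)^2) * hp

-- inner integral evaluation
lemma inner_eval (y t1 : ℝ) (h0 : 0 < y) (h1 : y < Real.pi / 2)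
    (ht1 : t1 ∈ Set.Icc y (Real.pi/2)) :
    ∫ t0 in y..(Real.pi/2), gg t0 t1 =
      (1/(16*Real.pi^2) * (-2 * (Real.cos ((Real.pi/2 + t1)/2) / Real.sin ((Real.pi/2 + t1)/2))
          + 2 * (Real.sin ((Real.pi/2 - t1)/2) / Real.cos ((Real.pi/2 - t1)/2))))
      - (1/(16*Real.pi^2) * (-2 * (Real.cos ((y + t1)/2) / Real.sin ((y + t1)/2))
          + 2 * (Real.sin ((y - t1)/2) / Real.cos ((y - t1)/2)))) := by
  have hle : y ≤ Real.pi/2 := h1.le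
  have hu : Set.uIcc y (Real.pi/2) = Set.Icc y (Real.pi/2) := Set.uIcc_of_le hle
  have hpi : Real.pi ≠ 0 := Real.pi_ne_zero
  have hSpos : ∀ t ∈ Set.Icc y (Real.pi/2), 0 < Real.sin ((t + t1)/2) := by
    intro t ht
    apply Real.sin_pos_of_pos_of_lt_pi
    · nlinarith [ht.1, ht1.1]
    · nlinarith [ht.2, ht1.2, Real.pi_pos]
  have hCpos : ∀ t ∈ Set.Icc y (Real.pi/2), 0 < Real.cos ((t - t1)/2) := by
    intro t ht
    apply Real.cos_pos_of_mem_Ioo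
    constructor
    · nlinarith [ht.1, ht1.2, Real.pi_pos]
    · nlinarith [ht.2, ht1.1, Real.pi_pos, h0]
  have hderiv : ∀ t ∈ Set.uIcc y (Real.pi/2),
      HasDerivAt (fun t0 => 1/(16*Real.pi^2) *
        (-2 * (Real.cos ((t0 + t1)/2) / Real.sin ((t0 + t1)/2))
          + 2 * (Real.sin ((t0 - t1)/2) / Real.cos ((t0 - t1)/2)))) (gg t t1) t := by
    intro t ht
    rw [hu] at ht
    have hc := hasDerivAt_cot_half t1 t (hSpos t ht).ne'
    have htn := hasDerivAt_tan_half t1 t (hCpos t ht).ne'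
    have := ((hc.const_mul (-2)).add (htn.const_mul 2)).const_mul (1/(16*Real.pi^2))
    refine this.congr_deriv ?_
    unfold gg
    field_simp
  have hint : IntervalIntegrable (fun t0 => gg t0 t1) volume y (Real.pi/2) := by
    apply ContinuousOn.intervalIntegrable
    unfold gg
    apply ContinuousOn.mul continuousOn_const
    apply ContinuousOn.add
    · apply ContinuousOn.div continuousOn_const
      · exact ((Real.continuous_sin.comp (by continuity)).pow 2).continuousOn
      · intro t ht
        rw [hu] at ht
        exact pow_ne_zero 2 (hSpos t ht).ne'
    · apply ContinuousOn.div continuousOn_const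
      · exact ((Real.continuous_cos.comp (by continuity)).pow 2).continuousOn
      · intro t ht
        rw [hu] at ht
        exact pow_ne_zero 2 (hCpos t ht).ne'
  exact integral_eq_sub_of_hasDerivAt hderiv hint


noncomputable def JJ (y t : ℝ) : ℝ :=
  (1/(16*Real.pi^2) * (-2 * (Real.cos ((Real.pi/2 + t)/2) / Real.sin ((Real.pi/2 + t)/2))
      + 2 * (Real.sin ((Real.pi/2 - t)/2) / Real.cos ((Real.pi/2 - t)/2))))
  - (1/(16*Real.pi^2) * (-2 * (Real.cos ((y + t)/2) / Real.sin ((y + t)/2))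
      + 2 * (Real.sin ((y - t)/2) / Real.cos ((y - t)/2))))

noncomputable def HH (y t : ℝ) : ℝ :=
  1/(16*Real.pi^2) * (4*Real.log (Real.sin ((y+t)/2)) - 4*Real.log (Real.sin ((Real.pi/2+t)/2))
    + 4*Real.log (Real.cos ((Real.pi/2-t)/2)) - 4*Real.log (Real.cos ((y-t)/2)))

lemma outer_eval (y : ℝ) (h0 : 0 < y) (h1 : y < Real.pi / 2) :
    ∫ t in y..(Real.pi/2), JJ y t = HH y (Real.pi/2) - HH y y := by
  have hle : y ≤ Real.pi/2 := h1.le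
  have hu : Set.uIcc y (Real.pi/2) = Set.Icc y (Real.pi/2) := Set.uIcc_of_le hle
  have hs1 : ∀ t ∈ Set.Icc y (Real.pi/2), 0 < Real.sin ((y+t)/2) := by
    intro t ht
    apply Real.sin_pos_of_pos_of_lt_pi
    · nlinarith [ht.1]
    · nlinarith [ht.2, Real.pi_pos]
  have hs2 : ∀ t ∈ Set.Icc y (Real.pi/2), 0 < Real.sin ((Real.pi/2+t)/2) := by
    intro t ht
    apply Real.sin_pos_of_pos_of_lt_pi
    · nlinarith [ht.1, Real.pi_pos]
    · nlinarith [ht.2, Real.pi_pos]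
  have hc3 : ∀ t ∈ Set.Icc y (Real.pi/2), 0 < Real.cos ((Real.pi/2-t)/2) := by
    intro t ht
    apply Real.cos_pos_of_mem_Ioo
    constructor
    · nlinarith [ht.2, Real.pi_pos]
    · nlinarith [ht.1, Real.pi_pos, h0]
  have hc4 : ∀ t ∈ Set.Icc y (Real.pi/2), 0 < Real.cos ((y-t)/2) := by
    intro t ht
    apply Real.cos_pos_of_mem_Ioo
    constructor
    · nlinarith [ht.2, Real.pi_pos, h0]
    · nlinarith [ht.1, Real.pi_pos]
  have hderiv : ∀ t ∈ Set.uIcc y (Real.pi/2), HasDerivAt (HH y) (JJ y t) t := by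
    intro t ht
    rw [hu] at ht
    have haff1 : HasDerivAt (fun s : ℝ => (y+s)/2) (1/2) t :=
      ((hasDerivAt_id t).const_add y).div_const 2
    have haff2 : HasDerivAt (fun s : ℝ => (Real.pi/2+s)/2) (1/2) t :=
      ((hasDerivAt_id t).const_add (Real.pi/2)).div_const 2
    have haff3 : HasDerivAt (fun s : ℝ => (Real.pi/2-s)/2) ((-1)/2) t :=
      ((hasDerivAt_id t).const_sub (Real.pi/2)).div_const 2
    have haff4 : HasDerivAt (fun s : ℝ => (y-s)/2) ((-1)/2) t :=
      ((hasDerivAt_id t).const_sub y).div_const 2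
    have h1d : HasDerivAt (fun s => Real.log (Real.sin ((y+s)/2)))
        ((Real.cos ((y+t)/2) * (1/2)) / Real.sin ((y+t)/2)) t :=
      ((Real.hasDerivAt_sin _).comp t haff1).log (hs1 t ht).ne'
    have h2d : HasDerivAt (fun s => Real.log (Real.sin ((Real.pi/2+s)/2)))
        ((Real.cos ((Real.pi/2+t)/2) * (1/2)) / Real.sin ((Real.pi/2+t)/2)) t :=
      ((Real.hasDerivAt_sin _).comp t haff2).log (hs2 t ht).ne'
    have h3d : HasDerivAt (fun s => Real.log (Real.cos ((Real.pi/2-s)/2)))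
        ((-Real.sin ((Real.pi/2-t)/2) * ((-1)/2)) / Real.cos ((Real.pi/2-t)/2)) t :=
      ((Real.hasDerivAt_cos _).comp t haff3).log (hc3 t ht).ne'
    have h4d : HasDerivAt (fun s => Real.log (Real.cos ((y-s)/2)))
        ((-Real.sin ((y-t)/2) * ((-1)/2)) / Real.cos ((y-t)/2)) t :=
      ((Real.hasDerivAt_cos _).comp t haff4).log (hc4 t ht).ne'
    have hall := ((((h1d.const_mul (4:ℝ)).sub (h2d.const_mul (4:ℝ))).add
        (h3d.const_mul (4:ℝ))).sub (h4d.const_mul (4:ℝ))).const_mul (1/(16*Real.pi^2))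
    have hfun : (HH y) = (fun t => 1/(16*Real.pi^2) *
        ((fun s => 4*Real.log (Real.sin ((y+s)/2))) t - (fun s => 4*Real.log (Real.sin ((Real.pi/2+s)/2))) t
          + (fun s => 4*Real.log (Real.cos ((Real.pi/2-s)/2))) t - (fun s => 4*Real.log (Real.cos ((y-s)/2))) t)) := by
      funext s; simp [HH]
    rw [hfun]
    refine hall.congr_deriv ?_
    unfold JJ
    field_simp
    ring
  have hint : IntervalIntegrable (JJ y) volume y (Real.pi/2) := by
    apply ContinuousOn.intervalIntegrable
    unfold JJ
    apply ContinuousOn.sub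
    · apply ContinuousOn.mul continuousOn_const
      apply ContinuousOn.add
      · apply ContinuousOn.mul continuousOn_const
        apply ContinuousOn.div
        · exact (Real.continuous_cos.comp (by continuity)).continuousOn
        · exact (Real.continuous_sin.comp (by continuity)).continuousOn
        · intro t ht; rw [hu] at ht; exact (hs2 t ht).ne'
      · apply ContinuousOn.mul continuousOn_const
        apply ContinuousOn.div
        · exact (Real.continuous_sin.comp (by continuity)).continuousOn
        · exact (Real.continuous_cos.comp (by continuity)).continuousOn
        · intro t ht; rw [hu] at ht; exact (hc3 t ht).ne'
    · apply ContinuousOn.mul continuousOn_const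
      apply ContinuousOn.add
      · apply ContinuousOn.mul continuousOn_const
        apply ContinuousOn.div
        · exact (Real.continuous_cos.comp (by continuity)).continuousOn
        · exact (Real.continuous_sin.comp (by continuity)).continuousOn
        · intro t ht; rw [hu] at ht; exact (hs1 t ht).ne'
      · apply ContinuousOn.mul continuousOn_const
        apply ContinuousOn.div
        · exact (Real.continuous_sin.comp (by continuity)).continuousOn
        · exact (Real.continuous_cos.comp (by continuity)).continuousOn
        · intro t ht; rw [hu] at ht; exact (hc4 t ht).ne'
  exact integral_eq_sub_of_hasDerivAt hderiv hint

lemma HH_value (y : ℝ) (h0 : 0 < y) (h1 : y < Real.pi / 2) :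
    HH y (Real.pi/2) - HH y y = -(1/(4*Real.pi^2)) * Real.log (Real.sin y) := by
  have eq1 : Real.sin ((y+Real.pi/2)/2) = Real.cos ((y-Real.pi/2)/2) := by
    rw [show (y+Real.pi/2)/2 = Real.pi/2 - ((Real.pi/2-y)/2) by ring, Real.sin_pi_div_two_sub,
      show (y-Real.pi/2)/2 = -((Real.pi/2-y)/2) by ring, Real.cos_neg]
  have eq2 : Real.sin ((Real.pi/2+y)/2) = Real.cos ((Real.pi/2-y)/2) := by
    rw [show (Real.pi/2+y)/2 = Real.pi/2 - ((Real.pi/2-y)/2) by ring, Real.sin_pi_div_two_sub]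
  unfold HH
  rw [show (Real.pi/2+Real.pi/2)/2 = Real.pi/2 by ring, Real.sin_pi_div_two,
    show (Real.pi/2-Real.pi/2)/2 = (0:ℝ) by ring, Real.cos_zero,
    show (y-y)/2 = (0:ℝ) by ring, Real.cos_zero,
    show (y+y)/2 = y by ring, Real.log_one, eq1, eq2]
  ring


/-- in the infinite strip example, for `0 < y < π/2`,
`4·Re(∫_y^{π/2}∫_y^{π/2} [F₊(conj z₁, z₀)·conj(F₊(conj z₀, z₁)) + F₋(conj z₁, z₀)·F₋(conj z₀, z₁)] dt₀ dt₁)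
  = −(1/π²)·log(sin y)`, where `z₀ = x + 𝕚t₀`, `z₁ = x + 𝕚t₁`. -/
theorem strip_c2_eval (x y : ℝ) (h0 : 0 < y) (h1 : y < Real.pi / 2) :
    4 * (∫ t1 in y..(Real.pi / 2), ∫ t0 in y..(Real.pi / 2),
          (Fplus ((starRingEnd ℂ) (x + Complex.I * t1)) (x + Complex.I * t0) *
              (starRingEnd ℂ)
                (Fplus ((starRingEnd ℂ) (x + Complex.I * t0)) (x + Complex.I * t1)) +
            Fminus ((starRingEnd ℂ) (x + Complex.I * t1)) (x + Complex.I * t0) *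
              Fminus ((starRingEnd ℂ) (x + Complex.I * t0)) (x + Complex.I * t1))).re
      = -(1 / Real.pi ^ 2) * Real.log (Real.sin y) := by
  have hle : y ≤ Real.pi / 2 := h1.le
  have hu : Set.uIcc y (Real.pi / 2) = Set.Icc y (Real.pi / 2) := Set.uIcc_of_le hle
  have hSpos : ∀ t0 ∈ Set.Icc y (Real.pi / 2), ∀ t1 ∈ Set.Icc y (Real.pi / 2),
      0 < Real.sin ((t0 + t1) / 2) := by
    intro t0 ht0 t1 ht1
    apply Real.sin_pos_of_pos_of_lt_pi
    · nlinarith [ht0.1, ht1.1]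
    · nlinarith [ht0.2, ht1.2, Real.pi_pos]
  have hCpos : ∀ t0 ∈ Set.Icc y (Real.pi / 2), ∀ t1 ∈ Set.Icc y (Real.pi / 2),
      0 < Real.cos ((t0 - t1) / 2) := by
    intro t0 ht0 t1 ht1
    apply Real.cos_pos_of_mem_Ioo
    constructor
    · nlinarith [ht0.1, ht1.2, Real.pi_pos, h0]
    · nlinarith [ht0.2, ht1.1, Real.pi_pos, h0]
  have hred : (∫ t1 in y..(Real.pi / 2), ∫ t0 in y..(Real.pi / 2),
          (Fplus ((starRingEnd ℂ) (x + Complex.I * t1)) (x + Complex.I * t0) *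
              (starRingEnd ℂ)
                (Fplus ((starRingEnd ℂ) (x + Complex.I * t0)) (x + Complex.I * t1)) +
            Fminus ((starRingEnd ℂ) (x + Complex.I * t1)) (x + Complex.I * t0) *
              Fminus ((starRingEnd ℂ) (x + Complex.I * t0)) (x + Complex.I * t1))) =
      (((∫ t1 in y..(Real.pi / 2), ∫ t0 in y..(Real.pi / 2), gg t0 t1 : ℝ)) : ℂ) := by
    rw [← intervalIntegral.integral_ofReal]
    apply intervalIntegral.integral_congr
    intro t1 ht1
    rw [hu] at ht1
    simp only
    rw [← intervalIntegral.integral_ofReal]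
    apply intervalIntegral.integral_congr
    intro t0 ht0
    rw [hu] at ht0
    simp only [gg]
    exact integrand_eq x t0 t1 (hSpos t0 ht0 t1 ht1).ne' (hCpos t0 ht0 t1 ht1).ne'
  rw [hred, Complex.ofReal_re]
  have hcongr : (∫ t1 in y..(Real.pi / 2), ∫ t0 in y..(Real.pi / 2), gg t0 t1) =
      ∫ t1 in y..(Real.pi / 2), JJ y t1 := by
    apply intervalIntegral.integral_congr
    intro t1 ht1
    rw [hu] at ht1
    simp only
    rw [inner_eval y t1 h0 h1 ht1]
    rfl
  rw [hcongr, outer_eval y h0 h1, HH_value y h0 h1]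
  have hpi : Real.pi ≠ 0 := Real.pi_ne_zero
  field_simp
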